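/- arXiv:2411.11028 — 3 statements merged into one kernel-verified Lean document; each statement's English description precedes it below -/
import Mathlib

section
/- Let m and n be positive natural numbers, let Γ, Γ̄ ∈ ℂ^{m×n} be arbitrary complex matrices, and let Ω, Ω̄ ∈ ℂ^{m×m} be Hermitian positive definite. Then log det(I + Ω^{-1}ΓΓ^H) ≥ log det(I + Ω̄^{-1}Γ̄Γ̄^H) − Tr(Ω̄^{-1}Γ̄Γ̄^H) + 2·Re Tr(Ω̄^{-1}Γ̄Γ^H) − Re Tr((Ω̄^{-1} − (Γ̄Γ̄^H + Ω̄)^{-1})^H (ΓΓ^H + Ω)). (This is the quadratic concave minorizer of the log-determinant rate function used in the majorization–minimization step; it is Lemma 2 of the paper.) -/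
open Matrix
open scoped ComplexOrder

/-!
By Weinstein–Aronszajn, `log det (1 + Ω⁻¹ Γ Γᴴ) = log det G` with `G = 1 + Γᴴ Ω⁻¹ Γ`, and by
Woodbury `G⁻¹ = 1 - Γᴴ S⁻¹ Γ` with `S = Γ Γᴴ + Ω`. Completing the square shows that `G⁻¹` is the
Loewner-least value of the MSE matrix `E(U) = 1 - Uᴴ Γ - Γᴴ U + Uᴴ S U`, attained at `U = S⁻¹ Γ`.
Concavity of `log det`, i.e. `log x ≤ x - 1` on the eigenvalues of `W^{1/2} G⁻¹ W^{1/2}`, gives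
`log det G ≥ log det W - tr (W G⁻¹) + n` for every `W ≻ 0`, hence
`log det G ≥ log det W - tr (W E(U)) + n` for all `W ≻ 0` and all `U`. Taking the values that are
optimal at the reference point, `W = 1 + Γ̄ᴴ Ω̄⁻¹ Γ̄` and `U = S̄⁻¹ Γ̄`, and evaluating the trace
with the push-through identities `S̄⁻¹ Γ̄ W = Ω̄⁻¹ Γ̄` and `Ω̄⁻¹ Γ̄ Γ̄ᴴ S̄⁻¹ = Ω̄⁻¹ - S̄⁻¹` yields
the bound.
-/

variable {ι κ : Type*} [Fintype ι] [DecidableEq ι] [Fintype κ]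

namespace Matrix

lemma PosDef.ofReal_re_det {A : Matrix ι ι ℂ} (hA : A.PosDef) : ((A.det.re : ℝ) : ℂ) = A.det :=
  Complex.ext rfl (Complex.pos_iff.mp hA.det_pos).2

lemma PosDef.re_det_pos {A : Matrix ι ι ℂ} (hA : A.PosDef) : 0 < A.det.re :=
  (Complex.pos_iff.mp hA.det_pos).1

lemma PosDef.log_re_det_le_re_trace_sub_card {A : Matrix ι ι ℂ} (hA : A.PosDef) :
    Real.log A.det.re ≤ A.trace.re - Fintype.card ι := by
  have hdet : A.det.re = ∏ i, hA.isHermitian.eigenvalues i := by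
    rw [hA.isHermitian.det_eq_prod_eigenvalues]; norm_cast
  have htr : A.trace.re - Fintype.card ι = ∑ i, (hA.isHermitian.eigenvalues i - 1) := by
    rw [hA.isHermitian.trace_eq_sum_eigenvalues, Finset.sum_sub_distrib]; norm_cast; simp
  rw [hdet, htr, Real.log_prod fun i _ ↦ (hA.eigenvalues_pos i).ne']
  exact Finset.sum_le_sum fun i _ ↦ Real.log_le_sub_one_of_pos (hA.eigenvalues_pos i)

open scoped MatrixOrder in
lemma PosDef.log_re_det_le_log_re_det_add_re_trace_inv_mul_sub_card {A B : Matrix ι ι ℂ}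
    (hA : A.PosDef) (hB : B.PosDef) :
    Real.log A.det.re ≤ Real.log B.det.re + (B⁻¹ * A).trace.re - Fintype.card ι := by
  obtain ⟨Y, hY⟩ := CStarAlgebra.nonneg_iff_eq_star_mul_self.mp hB.inv.posSemidef.nonneg
  have hdetY : (star Y * Y).det = B.det⁻¹ := by
    rw [← hY, det_nonsing_inv, Ring.inverse_eq_inv']
  have hYunit : IsUnit Y := by
    rw [isUnit_iff_isUnit_det]
    refine isUnit_of_mul_isUnit_right (x := (star Y).det) ?_
    rw [← det_mul, hdetY]
    exact (isUnit_iff_ne_zero.mpr hB.det_pos.ne').inv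
  have hM : (Y * A * star Y).PosDef := (IsUnit.posDef_star_right_conjugate_iff hYunit).mpr hA
  have hdet : (Y * A * star Y).det.re = B.det.re⁻¹ * A.det.re := by
    rw [det_mul, det_mul, mul_right_comm, ← det_mul, det_mul_comm, hdetY, ← hA.ofReal_re_det,
      ← hB.ofReal_re_det]
    norm_cast
  have htr : (Y * A * star Y).trace = (B⁻¹ * A).trace := by
    rw [trace_mul_comm, ← Matrix.mul_assoc, ← hY]
  have := hM.log_re_det_le_re_trace_sub_card
  rw [hdet, htr, Real.log_mul (inv_ne_zero hB.re_det_pos.ne') hA.re_det_pos.ne',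
    Real.log_inv] at this
  linarith

open scoped MatrixOrder in
lemma PosSemidef.trace_mul_nonneg {A B : Matrix ι ι ℂ} (hA : A.PosSemidef) (hB : B.PosSemidef) :
    0 ≤ (A * B).trace := by
  obtain ⟨X, rfl⟩ := CStarAlgebra.nonneg_iff_eq_star_mul_self.mp hB.nonneg
  rw [← Matrix.mul_assoc, trace_mul_comm, ← Matrix.mul_assoc]
  exact (hA.mul_mul_conjTranspose_same X).trace_nonneg

lemma PosDef.posSemidef_conjTranspose_mul_mul_sub_add {S : Matrix ι ι ℂ} (hS : S.PosDef)
    (U Γ : Matrix ι κ ℂ) : (Uᴴ * S * U - Uᴴ * Γ - Γᴴ * U + Γᴴ * S⁻¹ * Γ).PosSemidef := by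
  have hSd := (isUnit_iff_isUnit_det S).mp hS.isUnit
  have hsq : (U - S⁻¹ * Γ)ᴴ * S * (U - S⁻¹ * Γ) = Uᴴ * S * U - Uᴴ * Γ - Γᴴ * U + Γᴴ * S⁻¹ * Γ := by
    rw [conjTranspose_sub, conjTranspose_mul, hS.isHermitian.inv]
    simp only [Matrix.sub_mul, Matrix.mul_sub, Matrix.mul_assoc,
      mul_nonsing_inv_cancel_left _ _ hSd, nonsing_inv_mul_cancel_left _ _ hSd]
    abel
  exact hsq ▸ hS.posSemidef.conjTranspose_mul_mul_same _

lemma PosSemidef.posDef_one_add_conjTranspose_mul_mul {P : Matrix κ κ ℂ} (hP : P.PosSemidef)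
    (Γ : Matrix κ ι ℂ) : (1 + Γᴴ * P * Γ).PosDef :=
  PosDef.one.add_posSemidef (hP.conjTranspose_mul_mul_same Γ)

end Matrix

variable [DecidableEq κ]

lemma Matrix.inv_one_add_mul_inv_mul {R : Type*} [CommRing R] (Γ : Matrix ι κ R)
    (Δ : Matrix κ ι R) {Ω : Matrix ι ι R} (hΩ : IsUnit Ω) (hS : IsUnit (Γ * Δ + Ω)) :
    (1 + Δ * Ω⁻¹ * Γ)⁻¹ = 1 - Δ * (Γ * Δ + Ω)⁻¹ * Γ := by
  have hΩinv : Ω⁻¹⁻¹ = Ω := nonsing_inv_nonsing_inv _ ((isUnit_iff_isUnit_det Ω).mp hΩ)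
  have := add_mul_mul_inv_eq_sub 1 Δ Ω⁻¹ Γ isUnit_one (isUnit_nonsing_inv_iff.mpr hΩ)
    (by rwa [hΩinv, inv_one, Matrix.mul_one, add_comm])
  rwa [hΩinv, inv_one, Matrix.mul_one, Matrix.one_mul, Matrix.mul_one, add_comm Ω] at this

lemma Matrix.inv_mul_mul_one_add_mul_inv_mul {R : Type*} [CommRing R] (Γ : Matrix ι κ R)
    (Δ : Matrix κ ι R) {Ω : Matrix ι ι R} (hΩ : IsUnit Ω) (hS : IsUnit (Γ * Δ + Ω)) :
    (Γ * Δ + Ω)⁻¹ * Γ * (1 + Δ * Ω⁻¹ * Γ) = Ω⁻¹ * Γ := by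
  have : Γ * (1 + Δ * Ω⁻¹ * Γ) = (Γ * Δ + Ω) * (Ω⁻¹ * Γ) := by
    rw [Matrix.mul_add, Matrix.add_mul, Matrix.mul_one, Matrix.mul_assoc, Matrix.mul_assoc,
      mul_nonsing_inv_cancel_left _ _ ((isUnit_iff_isUnit_det Ω).mp hΩ), add_comm]
  rw [Matrix.mul_assoc, this, nonsing_inv_mul_cancel_left _ _ ((isUnit_iff_isUnit_det _).mp hS)]

lemma Matrix.one_add_mul_inv_mul_mul_mul_inv {R : Type*} [CommRing R] (Γ : Matrix ι κ R)
    (Δ : Matrix κ ι R) {Ω : Matrix ι ι R} (hΩ : IsUnit Ω) (hS : IsUnit (Γ * Δ + Ω)) :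
    (1 + Δ * Ω⁻¹ * Γ) * Δ * (Γ * Δ + Ω)⁻¹ = Δ * Ω⁻¹ := by
  have : (1 + Δ * Ω⁻¹ * Γ) * Δ = Δ * Ω⁻¹ * (Γ * Δ + Ω) := by
    rw [Matrix.add_mul, Matrix.mul_add, Matrix.one_mul, Matrix.mul_assoc, Matrix.mul_assoc,
      Matrix.mul_assoc, nonsing_inv_mul _ ((isUnit_iff_isUnit_det Ω).mp hΩ), Matrix.mul_one,
      add_comm]
  rw [this, mul_nonsing_inv_cancel_right _ _ ((isUnit_iff_isUnit_det _).mp hS)]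

/-- `(1 - Uᴴ Γ)(1 - Uᴴ Γ)ᴴ + Uᴴ Ω U`, the error covariance of the linear estimate `Uᴴ y` of
`x ∼ 𝒞𝒩(0, 1)` from `y = Γ x + z` with independent noise `z ∼ 𝒞𝒩(0, Ω)`. -/
def mseMatrix (Γ : Matrix ι κ ℂ) (Ω : Matrix ι ι ℂ) (U : Matrix ι κ ℂ) : Matrix κ κ ℂ :=
  1 - Uᴴ * Γ - Γᴴ * U + Uᴴ * (Γ * Γᴴ + Ω) * U

lemma Matrix.PosDef.posSemidef_mseMatrix_sub_inv {Ω : Matrix ι ι ℂ} (hΩ : Ω.PosDef)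
    (Γ U : Matrix ι κ ℂ) : (mseMatrix Γ Ω U - (1 + Γᴴ * Ω⁻¹ * Γ)⁻¹).PosSemidef := by
  have hS : (Γ * Γᴴ + Ω).PosDef := hΩ.posSemidef_add (posSemidef_self_mul_conjTranspose Γ)
  rw [inv_one_add_mul_inv_mul Γ Γᴴ hΩ.isUnit hS.isUnit]
  convert hS.posSemidef_conjTranspose_mul_mul_sub_add U Γ using 1
  rw [mseMatrix]
  abel

lemma Matrix.PosDef.log_re_det_sub_re_trace_mul_mseMatrix_le {Ω : Matrix ι ι ℂ} (hΩ : Ω.PosDef)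
    {W : Matrix κ κ ℂ} (hW : W.PosDef) (Γ U : Matrix ι κ ℂ) :
    Real.log W.det.re - (W * mseMatrix Γ Ω U).trace.re + Fintype.card κ ≤
      Real.log (1 + Γᴴ * Ω⁻¹ * Γ).det.re := by
  have hlog := hW.log_re_det_le_log_re_det_add_re_trace_inv_mul_sub_card
    (hΩ.inv.posSemidef.posDef_one_add_conjTranspose_mul_mul Γ)
  rw [trace_mul_comm] at hlog
  have htr : (W * (1 + Γᴴ * Ω⁻¹ * Γ)⁻¹).trace.re ≤ (W * mseMatrix Γ Ω U).trace.re := by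
    have := (hW.posSemidef.trace_mul_nonneg (hΩ.posSemidef_mseMatrix_sub_inv Γ U)).1
    rw [Matrix.mul_sub, trace_sub, Complex.sub_re] at this
    simpa using this
  linarith

lemma re_trace_mul_mseMatrix {Ωbar : Matrix ι ι ℂ} (hΩbar : Ωbar.PosDef)
    (Γ Γbar : Matrix ι κ ℂ) (Ω : Matrix ι ι ℂ) :
    ((1 + Γbarᴴ * Ωbar⁻¹ * Γbar) * mseMatrix Γ Ω ((Γbar * Γbarᴴ + Ωbar)⁻¹ * Γbar)).trace.re =
      Fintype.card κ + (Ωbar⁻¹ * (Γbar * Γbarᴴ)).trace.re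
        - 2 * (Ωbar⁻¹ * (Γbar * Γᴴ)).trace.re
        + ((Ωbar⁻¹ - (Γbar * Γbarᴴ + Ωbar)⁻¹)ᴴ * (Γ * Γᴴ + Ω)).trace.re := by
  set Sbar := Γbar * Γbarᴴ + Ωbar
  set F := 1 + Γbarᴴ * Ωbar⁻¹ * Γbar
  set S := Γ * Γᴴ + Ω
  have hSbar : Sbar.PosDef := hΩbar.posSemidef_add (posSemidef_self_mul_conjTranspose Γbar)
  have hUF : Sbar⁻¹ * Γbar * F = Ωbar⁻¹ * Γbar :=
    inv_mul_mul_one_add_mul_inv_mul Γbar Γbarᴴ hΩbar.isUnit hSbar.isUnit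
  have hFU : F * Γbarᴴ * Sbar⁻¹ = Γbarᴴ * Ωbar⁻¹ :=
    one_add_mul_inv_mul_mul_mul_inv Γbar Γbarᴴ hΩbar.isUnit hSbar.isUnit
  have hinv_sub : Ωbar⁻¹ * Γbar * (Γbarᴴ * Sbar⁻¹) = Ωbar⁻¹ - Sbar⁻¹ := by
    rw [Matrix.inv_sub_inv (by simp [hΩbar.isUnit, hSbar.isUnit]), add_sub_cancel_right]
    simp only [Matrix.mul_assoc]
  have htr_F : F.trace = Fintype.card κ + (Ωbar⁻¹ * (Γbar * Γbarᴴ)).trace := by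
    rw [trace_add, trace_one, Matrix.mul_assoc, trace_mul_comm, Matrix.mul_assoc]
  have htr_cross_left : (F * (Γbarᴴ * Sbar⁻¹ * Γ)).trace = star (Ωbar⁻¹ * (Γbar * Γᴴ)).trace := by
    rw [← Matrix.mul_assoc, ← Matrix.mul_assoc, hFU, ← trace_conjTranspose]
    simp only [conjTranspose_mul, hΩbar.isHermitian.inv.eq, conjTranspose_conjTranspose]
    rw [trace_mul_comm, Matrix.mul_assoc]
  have htr_cross_right : (F * (Γᴴ * (Sbar⁻¹ * Γbar))).trace = (Ωbar⁻¹ * (Γbar * Γᴴ)).trace := by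
    rw [trace_mul_comm, Matrix.mul_assoc, hUF, trace_mul_comm, Matrix.mul_assoc]
  have htr_quadratic : (F * (Γbarᴴ * Sbar⁻¹ * S * (Sbar⁻¹ * Γbar))).trace =
      ((Ωbar⁻¹ - Sbar⁻¹)ᴴ * S).trace := by
    rw [← Matrix.mul_assoc, trace_mul_comm, ← Matrix.mul_assoc, hUF,
      ← Matrix.mul_assoc (Ωbar⁻¹ * Γbar), hinv_sub, conjTranspose_sub, hΩbar.isHermitian.inv,
      hSbar.isHermitian.inv]
  rw [mseMatrix, conjTranspose_mul, hSbar.isHermitian.inv, Matrix.mul_add, Matrix.mul_sub,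
    Matrix.mul_sub, Matrix.mul_one, trace_add, trace_sub, trace_sub, htr_F, htr_cross_left,
    htr_cross_right, htr_quadratic]
  simp only [Complex.add_re, Complex.sub_re, Complex.natCast_re, Complex.star_def, Complex.conj_re]
  ring

theorem logdet_quadratic_minorizer_general {m n : ℕ}
    (Γ Γbar : Matrix (Fin m) (Fin n) ℂ)
    (Ω Ωbar : Matrix (Fin m) (Fin m) ℂ)
    (hΩ : Ω.PosDef) (hΩbar : Ωbar.PosDef) :
    Real.log ((1 + Ω⁻¹ * (Γ * Γᴴ)).det.re) ≥
      Real.log ((1 + Ωbar⁻¹ * (Γbar * Γbarᴴ)).det.re)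
        - ((Ωbar⁻¹ * (Γbar * Γbarᴴ)).trace).re
        + 2 * ((Ωbar⁻¹ * (Γbar * Γᴴ)).trace).re
        - (((Ωbar⁻¹ - (Γbar * Γbarᴴ + Ωbar)⁻¹)ᴴ * (Γ * Γᴴ + Ω)).trace).re := by
  have hdet : ∀ (Γ : Matrix (Fin m) (Fin n) ℂ) (Ω : Matrix (Fin m) (Fin m) ℂ),
      (1 + Ω⁻¹ * (Γ * Γᴴ)).det = (1 + Γᴴ * Ω⁻¹ * Γ).det := fun Γ Ω ↦ by
    rw [← Matrix.mul_assoc, det_one_add_mul_comm, Matrix.mul_assoc]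
  have := hΩ.log_re_det_sub_re_trace_mul_mseMatrix_le
    (hΩbar.inv.posSemidef.posDef_one_add_conjTranspose_mul_mul Γbar) Γ
    ((Γbar * Γbarᴴ + Ωbar)⁻¹ * Γbar)
  rw [re_trace_mul_mseMatrix hΩbar, Fintype.card_fin] at this
  rw [hdet, hdet]
  linarith

/-- **Lemma 2 of the paper.** Quadratic concave minorizer of the log-det rate function:
for arbitrary complex matrices `Γ, Γ̄ ∈ ℂ^{m×n}` and Hermitian positive definite
`Ω, Ω̄ ∈ ℂ^{m×m}`,
`log det(I + Ω⁻¹ΓΓᴴ) ≥ log det(I + Ω̄⁻¹Γ̄Γ̄ᴴ) − Tr(Ω̄⁻¹Γ̄Γ̄ᴴ) + 2 Re Tr(Ω̄⁻¹Γ̄Γᴴ)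
  − Re Tr((Ω̄⁻¹ − (Γ̄Γ̄ᴴ + Ω̄)⁻¹)ᴴ (ΓΓᴴ + Ω))`. -/
theorem logdet_quadratic_minorizer {m n : ℕ} (hm : 0 < m) (hn : 0 < n)
    (Γ Γbar : Matrix (Fin m) (Fin n) ℂ)
    (Ω Ωbar : Matrix (Fin m) (Fin m) ℂ)
    (hΩ : Ω.PosDef) (hΩbar : Ωbar.PosDef) :
    Real.log ((1 + Ω⁻¹ * (Γ * Γᴴ)).det.re) ≥
      Real.log ((1 + Ωbar⁻¹ * (Γbar * Γbarᴴ)).det.re)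
        - ((Ωbar⁻¹ * (Γbar * Γbarᴴ)).trace).re
        + 2 * ((Ωbar⁻¹ * (Γbar * Γᴴ)).trace).re
        - (((Ωbar⁻¹ - (Γbar * Γbarᴴ + Ωbar)⁻¹)ᴴ * (Γ * Γᴴ + Ω)).trace).re :=
  logdet_quadratic_minorizer_general Γ Γbar Ω Ωbar hΩ hΩbar
end

section
/- Let m and n be positive natural numbers, let Γ, Γ̄ ∈ ℂ^{m×n} be arbitrary complex matrices, and let Ω, Ω̄ ∈ ℂ^{m×m} be Hermitian positive definite. Then Tr(Ω^{-1}ΓΓ^H) ≥ 2·Re Tr(Ω̄^{-1}Γ̄Γ^H) − Re Tr(Ω̄^{-1}Γ̄Γ̄^H Ω̄^{-1} Ω), where both sides are real numbers. (This is the linear minorizer, at the reference point (Γ̄, Ω̄), of the jointly convex matrix-fractional function f(Γ, Ω) = Tr(Ω^{-1}ΓΓ^H); it is Lemma 3 of the paper.) -/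
/-!
Since `Ω⁻¹` is positive semidefinite, `Re Tr(Ω⁻¹ M Mᴴ) ≥ 0` for every `M`. Taking
`M = Γ - Ω A` and expanding gives `Re Tr(Ω⁻¹ΓΓᴴ) ≥ 2 Re Tr(AΓᴴ) - Re Tr(AAᴴΩ)` for every `A`;
the minorizer is the case `A = Ω̄⁻¹Γ̄`, where the bound is tight at `(Γ, Ω) = (Γ̄, Ω̄)`.
-/

open Matrix
open scoped ComplexOrder

namespace Matrix

variable {m n 𝕜 : Type*} [Fintype m] [Fintype n] [RCLike 𝕜]

theorem PosSemidef.re_trace_mul_mul_conjTranspose_nonneg {P : Matrix m m 𝕜} (hP : P.PosSemidef)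
    (M : Matrix m n 𝕜) : 0 ≤ RCLike.re (P * (M * Mᴴ)).trace := by
  have hcycle : (P * (M * Mᴴ)).trace = (Mᴴ * P * M).trace := by
    rw [trace_mul_comm, Matrix.mul_assoc, trace_mul_comm]
  exact (RCLike.nonneg_iff.mp (hcycle ▸ (hP.conjTranspose_mul_mul_same M).trace_nonneg)).1

variable [DecidableEq m]

theorem trace_inv_mul_sub_mul_conjTranspose {Ω : Matrix m m 𝕜} (hΩ : Ω.IsHermitian)
    (hΩu : IsUnit Ω) (Γ A : Matrix m n 𝕜) :
    (Ω⁻¹ * ((Γ - Ω * A) * (Γ - Ω * A)ᴴ)).trace =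
      (Ω⁻¹ * (Γ * Γᴴ)).trace - star (A * Γᴴ).trace - (A * Γᴴ).trace + (A * Aᴴ * Ω).trace := by
  have hdet : IsUnit Ω.det := (Ω.isUnit_iff_isUnit_det).mp hΩu
  have hcross : (Ω⁻¹ * Γ * Aᴴ * Ω).trace = star (A * Γᴴ).trace := by
    rw [trace_mul_comm, ← trace_conjTranspose]
    simp only [conjTranspose_mul, conjTranspose_conjTranspose, ← Matrix.mul_assoc,
      Ω.mul_nonsing_inv hdet, Matrix.one_mul]
  simp only [conjTranspose_sub, conjTranspose_mul, hΩ.eq, Matrix.sub_mul, Matrix.mul_sub,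
    trace_sub, ← Matrix.mul_assoc, Ω.nonsing_inv_mul hdet, Matrix.one_mul, hcross]
  abel

theorem PosDef.re_trace_inv_mul_mul_conjTranspose_ge {Ω : Matrix m m 𝕜} (hΩ : Ω.PosDef)
    (Γ A : Matrix m n 𝕜) :
    2 * RCLike.re (A * Γᴴ).trace - RCLike.re (A * Aᴴ * Ω).trace ≤
      RCLike.re (Ω⁻¹ * (Γ * Γᴴ)).trace := by
  have h := hΩ.inv.posSemidef.re_trace_mul_mul_conjTranspose_nonneg (Γ - Ω * A)
  rw [trace_inv_mul_sub_mul_conjTranspose hΩ.isHermitian hΩ.isUnit] at h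
  simp only [map_add, map_sub, RCLike.star_def, RCLike.conj_re] at h
  linarith

end Matrix

theorem trace_fractional_linear_minorizer_general {m n : ℕ}
    (Γ Γbar : Matrix (Fin m) (Fin n) ℂ)
    (Ω Ωbar : Matrix (Fin m) (Fin m) ℂ)
    (hΩ : Ω.PosDef) (hΩbar : Ωbar.PosDef) :
    ((Ω⁻¹ * (Γ * Γᴴ)).trace).re ≥
      2 * ((Ωbar⁻¹ * (Γbar * Γᴴ)).trace).re
        - ((Ωbar⁻¹ * (Γbar * Γbarᴴ) * Ωbar⁻¹ * Ω).trace).re := by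
  have h := hΩ.re_trace_inv_mul_mul_conjTranspose_ge Γ (Ωbar⁻¹ * Γbar)
  rw [conjTranspose_mul, hΩbar.isHermitian.inv.eq] at h
  simp only [Matrix.mul_assoc] at h ⊢
  exact h

/-- **Lemma 3 of the paper.** Linear minorizer of the jointly convex matrix-fractional
function `f(Γ, Ω) = Tr(Ω⁻¹ΓΓᴴ)`: for arbitrary `Γ, Γ̄ ∈ ℂ^{m×n}` and Hermitian positive
definite `Ω, Ω̄ ∈ ℂ^{m×m}`,
`Tr(Ω⁻¹ΓΓᴴ) ≥ 2 Re Tr(Ω̄⁻¹Γ̄Γᴴ) − Re Tr(Ω̄⁻¹Γ̄Γ̄ᴴΩ̄⁻¹Ω)`. -/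
theorem trace_fractional_linear_minorizer {m n : ℕ} (hm : 0 < m) (hn : 0 < n)
    (Γ Γbar : Matrix (Fin m) (Fin n) ℂ)
    (Ω Ωbar : Matrix (Fin m) (Fin m) ℂ)
    (hΩ : Ω.PosDef) (hΩbar : Ωbar.PosDef) :
    ((Ω⁻¹ * (Γ * Γᴴ)).trace).re ≥
      2 * ((Ωbar⁻¹ * (Γbar * Γᴴ)).trace).re
        - ((Ωbar⁻¹ * (Γbar * Γbarᴴ) * Ωbar⁻¹ * Ω).trace).re :=
  trace_fractional_linear_minorizer_general Γ Γbar Ω Ωbar hΩ hΩbar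
end

section
/- (Equation (40) of the paper: concave lower bound on the noise-fraction trace for the common message.) Fix the channels H_{lk,i} (so H̄_{lk,i} = H_{lk,i}) and fix reference precoders {W̄} = {W̄_i, W̄_{ij}}, and assume σ² > 0. Then for the pair (l,k) considered and for every choice of precoders {W} = {W_i, W_{ij}}: Tr(D_{c,lk}(S_{c,lk} + D_{c,lk})^{-1}) ≥ 2 Σ_{i=1}^{L} Σ_{j=1}^{K} Re Tr((S̄_{c,lk} + D̄_{c,lk})^{-1} H_{lk,i} W̄_{ij} W_{ij}^H H_{lk,i}^H) + 2 Σ_{i ≠ l} Re Tr((S̄_{c,lk} + D̄_{c,lk})^{-1} H_{lk,i} W̄_{i} W_{i}^H H_{lk,i}^H) − Re Tr((S̄_{c,lk} + D̄_{c,lk})^{-1} D̄_{c,lk} (S̄_{c,lk} + D̄_{c,lk})^{-1} (S_{c,lk} + D_{c,lk})), where barred quantities are evaluated at {W̄} and unbarred quantities at {W}, and the left-hand side is a real number. -/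
/-!
For `T` positive definite and `R` Hermitian, expanding `(T⁻¹V - RV')ᴴ T (T⁻¹V - RV') ⪰ 0` gives
`2 Re Tr(R V' Vᴴ) ≤ Tr(V Vᴴ T⁻¹) + Tr(R V' V'ᴴ R T)`. Now `D_{c,lk} = σ²I + Σ_a V_a V_aᴴ`, where
`V_a` runs over the interfering streams `H_{lk,i}W_{ij}` and `H_{lk,i}W_i` (`i ≠ l`). Summing the
inequality over these streams with `T = S_{c,lk} + D_{c,lk}`, `R = (S̄_{c,lk} + D̄_{c,lk})⁻¹` and
`V'_a` the reference streams gives the bound, up to the terms `σ² Tr T⁻¹` and `σ² Tr(R R T)`,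
which are nonnegative.
-/

open Matrix Finset
open scoped ComplexOrder

noncomputable section RSMA

variable {L K Nu NBS : ℕ}

/-- Transmit covariance `C_i = W_iW_iᴴ + Σ_j W_{ij}W_{ij}ᴴ` of base station `i`. -/
def Cmat (Wc : Fin L → Matrix (Fin NBS) (Fin NBS) ℂ)
    (Wp : Fin L → Fin K → Matrix (Fin NBS) (Fin NBS) ℂ) (i : Fin L) :
    Matrix (Fin NBS) (Fin NBS) ℂ :=
  Wc i * (Wc i)ᴴ + ∑ j : Fin K, Wp i j * (Wp i j)ᴴ

/-- Private-signal covariance `S_{lk} = H_{lk,l}W_{lk}(H_{lk,l}W_{lk})ᴴ`. -/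
def Smat (H : Fin L → Fin K → Fin L → Matrix (Fin Nu) (Fin NBS) ℂ)
    (Wp : Fin L → Fin K → Matrix (Fin NBS) (Fin NBS) ℂ)
    (l : Fin L) (k : Fin K) : Matrix (Fin Nu) (Fin Nu) ℂ :=
  (H l k l * Wp l k) * (H l k l * Wp l k)ᴴ

/-- Common-signal covariance `S_{c,lk} = H_{lk,l}W_{l}(H_{lk,l}W_{l})ᴴ`. -/
def Scmat (H : Fin L → Fin K → Fin L → Matrix (Fin Nu) (Fin NBS) ℂ)
    (Wc : Fin L → Matrix (Fin NBS) (Fin NBS) ℂ)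
    (l : Fin L) (k : Fin K) : Matrix (Fin Nu) (Fin Nu) ℂ :=
  (H l k l * Wc l) * (H l k l * Wc l)ᴴ

/-- Interference-plus-noise covariance
`D_{lk} = σ²I + Σ_{j≠k} H_{lk,l}W_{lj}(H_{lk,l}W_{lj})ᴴ + Σ_{i≠l} H_{lk,i}C_iH_{lk,i}ᴴ`. -/
def Dmat (σ2 : ℝ) (H : Fin L → Fin K → Fin L → Matrix (Fin Nu) (Fin NBS) ℂ)
    (Wc : Fin L → Matrix (Fin NBS) (Fin NBS) ℂ)
    (Wp : Fin L → Fin K → Matrix (Fin NBS) (Fin NBS) ℂ)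
    (l : Fin L) (k : Fin K) : Matrix (Fin Nu) (Fin Nu) ℂ :=
  (σ2 : ℂ) • (1 : Matrix (Fin Nu) (Fin Nu) ℂ)
    + ∑ j ∈ Finset.univ.erase k, (H l k l * Wp l j) * (H l k l * Wp l j)ᴴ
    + ∑ i ∈ Finset.univ.erase l, H l k i * Cmat Wc Wp i * (H l k i)ᴴ

/-- `D_{c,lk} = D_{lk} + S_{lk}`. -/
def Dcmat (σ2 : ℝ) (H : Fin L → Fin K → Fin L → Matrix (Fin Nu) (Fin NBS) ℂ)
    (Wc : Fin L → Matrix (Fin NBS) (Fin NBS) ℂ)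
    (Wp : Fin L → Fin K → Matrix (Fin NBS) (Fin NBS) ℂ)
    (l : Fin L) (k : Fin K) : Matrix (Fin Nu) (Fin Nu) ℂ :=
  Dmat σ2 H Wc Wp l k + Smat H Wp l k

/-- Channel dispersion of the private message: `ζ'_{lk} = 2 Tr(S_{lk} D_{c,lk}⁻¹)`. -/
def zetaP (σ2 : ℝ) (H : Fin L → Fin K → Fin L → Matrix (Fin Nu) (Fin NBS) ℂ)
    (Wc : Fin L → Matrix (Fin NBS) (Fin NBS) ℂ)
    (Wp : Fin L → Fin K → Matrix (Fin NBS) (Fin NBS) ℂ)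
    (l : Fin L) (k : Fin K) : ℝ :=
  2 * ((Smat H Wp l k * (Dcmat σ2 H Wc Wp l k)⁻¹).trace).re

/-- Channel dispersion of the common message:
`ζ_{c,lk} = 2 Tr(S_{c,lk}(S_{c,lk} + D_{c,lk})⁻¹)`. -/
def zetaC (σ2 : ℝ) (H : Fin L → Fin K → Fin L → Matrix (Fin Nu) (Fin NBS) ℂ)
    (Wc : Fin L → Matrix (Fin NBS) (Fin NBS) ℂ)
    (Wp : Fin L → Fin K → Matrix (Fin NBS) (Fin NBS) ℂ)
    (l : Fin L) (k : Fin K) : ℝ :=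
  2 * ((Scmat H Wc l k * (Scmat H Wc l k + Dcmat σ2 H Wc Wp l k)⁻¹).trace).re

/-- Finite-blocklength private rate
`r_{p,lk} = log det(I + D_{lk}⁻¹S_{lk}) − q_p √(2Tr(S_{lk}D_{c,lk}⁻¹)/n)`. -/
def rpRate (σ2 nn qp : ℝ) (H : Fin L → Fin K → Fin L → Matrix (Fin Nu) (Fin NBS) ℂ)
    (Wc : Fin L → Matrix (Fin NBS) (Fin NBS) ℂ)
    (Wp : Fin L → Fin K → Matrix (Fin NBS) (Fin NBS) ℂ)
    (l : Fin L) (k : Fin K) : ℝ :=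
  Real.log ((1 + (Dmat σ2 H Wc Wp l k)⁻¹ * Smat H Wp l k).det.re)
    - qp * Real.sqrt (zetaP σ2 H Wc Wp l k / nn)

/-- Finite-blocklength common rate
`r_{c,lk} = log det(I + D_{c,lk}⁻¹S_{c,lk}) − q_c √(2Tr(S_{c,lk}(S_{c,lk}+D_{c,lk})⁻¹)/n)`. -/
def rcRate (σ2 nn qc : ℝ) (H : Fin L → Fin K → Fin L → Matrix (Fin Nu) (Fin NBS) ℂ)
    (Wc : Fin L → Matrix (Fin NBS) (Fin NBS) ℂ)
    (Wp : Fin L → Fin K → Matrix (Fin NBS) (Fin NBS) ℂ)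
    (l : Fin L) (k : Fin K) : ℝ :=
  Real.log ((1 + (Dcmat σ2 H Wc Wp l k)⁻¹ * Scmat H Wc l k).det.re)
    - qc * Real.sqrt (zetaC σ2 H Wc Wp l k / nn)

section TraceBound

variable {n m ι : Type*} [Fintype n] [DecidableEq n] [Fintype m]

omit [DecidableEq n] in
lemma Matrix.PosSemidef.re_trace_nonneg {M : Matrix n n ℂ} (hM : M.PosSemidef) :
    0 ≤ M.trace.re :=
  (Complex.nonneg_iff.mp hM.trace_nonneg).1

lemma posDef_smul_one_add_sum_mul_conjTranspose (s : Finset ι) {c : ℝ} (hc : 0 < c)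
    (V : ι → Matrix n m ℂ) :
    ((c : ℂ) • (1 : Matrix n n ℂ) + ∑ a ∈ s, V a * (V a)ᴴ).PosDef :=
  (PosDef.one.smul (Complex.zero_lt_real.mpr hc)).add_posSemidef
    (posSemidef_sum s fun a _ => posSemidef_self_mul_conjTranspose (V a))

lemma two_mul_re_trace_le {T R : Matrix n n ℂ} (hT : T.PosDef) (hR : R.IsHermitian)
    (V V' : Matrix n m ℂ) :
    2 * (R * V' * Vᴴ).trace.re ≤ (V * Vᴴ * T⁻¹).trace.re + (R * V' * V'ᴴ * R * T).trace.re := by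
  have hdet := T.isUnit_iff_isUnit_det.mp hT.isUnit
  set X := T⁻¹ * V - R * V'
  have hsq := (hT.posSemidef.conjTranspose_mul_mul_same X).re_trace_nonneg
  have hexp : Xᴴ * T * X
      = Vᴴ * T⁻¹ * V - Vᴴ * R * V' - (Vᴴ * R * V')ᴴ + V'ᴴ * R * T * R * V' := by
    simp only [X, conjTranspose_sub, conjTranspose_mul, conjTranspose_conjTranspose, hR.eq,
      hT.isHermitian.inv.eq, Matrix.sub_mul, Matrix.mul_sub, Matrix.mul_assoc,
      T.mul_nonsing_inv_cancel_left _ hdet, T.nonsing_inv_mul_cancel_left _ hdet]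
    abel
  have e1 : (Vᴴ * T⁻¹ * V).trace = (V * Vᴴ * T⁻¹).trace := trace_mul_cycle ..
  have e2 : (Vᴴ * R * V').trace = (R * V' * Vᴴ).trace := by
    rw [Matrix.mul_assoc, trace_mul_comm]
  have e3 : (V'ᴴ * R * T * R * V').trace = (R * V' * V'ᴴ * R * T).trace := by
    rw [trace_mul_comm, ← Matrix.mul_assoc, ← Matrix.mul_assoc, trace_mul_comm]
    simp only [Matrix.mul_assoc]
  rw [hexp, trace_add, trace_sub, trace_sub, trace_conjTranspose, e1, e2, e3] at hsq
  simp only [Complex.add_re, Complex.sub_re, Complex.star_def, Complex.conj_re] at hsq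
  linarith

lemma re_trace_smul_one_add_sum_mul_inv_ge (s : Finset ι) {c : ℝ} (hc : 0 ≤ c)
    {T R : Matrix n n ℂ} (hT : T.PosDef) (hR : R.IsHermitian) (V V' : ι → Matrix n m ℂ) :
    2 * ∑ a ∈ s, (R * V' a * (V a)ᴴ).trace.re
        - (R * ((c : ℂ) • 1 + ∑ a ∈ s, V' a * (V' a)ᴴ) * R * T).trace.re
      ≤ (((c : ℂ) • 1 + ∑ a ∈ s, V a * (V a)ᴴ) * T⁻¹).trace.re := by
  have hlhs : (R * ((c : ℂ) • 1 + ∑ a ∈ s, V' a * (V' a)ᴴ) * R * T).trace.re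
      = c * (R * R * T).trace.re + ∑ a ∈ s, (R * V' a * (V' a)ᴴ * R * T).trace.re := by
    simp [Matrix.mul_add, Matrix.add_mul, Matrix.mul_sum, Matrix.sum_mul, trace_add, trace_sum,
      Complex.re_sum, Matrix.mul_assoc]
  have hrhs : (((c : ℂ) • 1 + ∑ a ∈ s, V a * (V a)ᴴ) * T⁻¹).trace.re
      = c * (T⁻¹).trace.re + ∑ a ∈ s, (V a * (V a)ᴴ * T⁻¹).trace.re := by
    simp [Matrix.add_mul, Matrix.sum_mul, trace_add, trace_sum, Complex.re_sum]
  have hRRT : 0 ≤ (R * R * T).trace.re := by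
    rw [Matrix.mul_assoc, trace_mul_comm, Matrix.mul_assoc]
    simpa [hR.eq, Matrix.mul_assoc] using
      (hT.posSemidef.conjTranspose_mul_mul_same R).re_trace_nonneg
  have hTinv : 0 ≤ (T⁻¹).trace.re := hT.inv.posSemidef.re_trace_nonneg
  have hterms := Finset.sum_le_sum fun a (_ : a ∈ s) => two_mul_re_trace_le hT hR (V a) (V' a)
  rw [← Finset.mul_sum, Finset.sum_add_distrib] at hterms
  rw [hlhs, hrhs]
  have := mul_nonneg hc hRRT
  have := mul_nonneg hc hTinv
  linarith

end TraceBound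

/-- The effective channels `H_{lk,i}W_{ij}` (private streams, `inl (i, j)`) and `H_{lk,i}W_i`
(common streams, `inr i`) seen by user `(l, k)`. -/
def streamChannel (H : Fin L → Fin K → Fin L → Matrix (Fin Nu) (Fin NBS) ℂ)
    (Wc : Fin L → Matrix (Fin NBS) (Fin NBS) ℂ)
    (Wp : Fin L → Fin K → Matrix (Fin NBS) (Fin NBS) ℂ) (l : Fin L) (k : Fin K) :
    (Fin L × Fin K) ⊕ Fin L → Matrix (Fin Nu) (Fin NBS) ℂ :=
  Sum.elim (fun p => H l k p.1 * Wp p.1 p.2) (fun i => H l k i * Wc i)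

lemma Dcmat_eq_smul_one_add_sum (σ2 : ℝ)
    (H : Fin L → Fin K → Fin L → Matrix (Fin Nu) (Fin NBS) ℂ)
    (Wc : Fin L → Matrix (Fin NBS) (Fin NBS) ℂ)
    (Wp : Fin L → Fin K → Matrix (Fin NBS) (Fin NBS) ℂ) (l : Fin L) (k : Fin K) :
    Dcmat σ2 H Wc Wp l k = (σ2 : ℂ) • 1 + ∑ p ∈ univ.disjSum (univ.erase l),
      streamChannel H Wc Wp l k p * (streamChannel H Wc Wp l k p)ᴴ := by
  have hC : ∀ i, H l k i * Cmat Wc Wp i * (H l k i)ᴴ = (H l k i * Wc i) * (H l k i * Wc i)ᴴ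
      + ∑ j, (H l k i * Wp i j) * (H l k i * Wp i j)ᴴ := fun i => by
    simp [Cmat, Matrix.mul_add, Matrix.add_mul, Matrix.mul_sum, Matrix.sum_mul,
      conjTranspose_mul, Matrix.mul_assoc]
  rw [Dcmat, Dmat, Smat, sum_disjSum, Fintype.sum_prod_type]
  simp only [hC, sum_add_distrib, streamChannel, Sum.elim_inl, Sum.elim_inr]
  rw [← add_sum_erase univ _ (mem_univ l), ← add_sum_erase univ _ (mem_univ k)]
  abel

lemma posDef_Scmat_add_Dcmat {σ2 : ℝ} (hσ : 0 < σ2)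
    (H : Fin L → Fin K → Fin L → Matrix (Fin Nu) (Fin NBS) ℂ)
    (Wc : Fin L → Matrix (Fin NBS) (Fin NBS) ℂ)
    (Wp : Fin L → Fin K → Matrix (Fin NBS) (Fin NBS) ℂ) (l : Fin L) (k : Fin K) :
    (Scmat H Wc l k + Dcmat σ2 H Wc Wp l k).PosDef := by
  rw [Dcmat_eq_smul_one_add_sum]
  exact PosDef.posSemidef_add (posSemidef_self_mul_conjTranspose _)
    (posDef_smul_one_add_sum_mul_conjTranspose _ hσ _)

/-- **Equation (40) of the paper.** Concave lower bound on the noise-fraction trace for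
the common message: with the channels fixed (so `H̄ = H`) and reference precoders
`{W̄} = (Wcb, Wpb)`, assuming `σ² > 0`, for every choice of precoders `{W} = (Wc, Wp)`:
`Tr(D_{c,lk}(S_{c,lk} + D_{c,lk})⁻¹)
  ≥ 2 Σ_{ij} Re Tr((S̄_{c,lk}+D̄_{c,lk})⁻¹ H_{lk,i} W̄_{ij} W_{ij}ᴴ H_{lk,i}ᴴ)
  + 2 Σ_{i≠l} Re Tr((S̄_{c,lk}+D̄_{c,lk})⁻¹ H_{lk,i} W̄_{i} W_{i}ᴴ H_{lk,i}ᴴ)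
  − Re Tr((S̄_{c,lk}+D̄_{c,lk})⁻¹ D̄_{c,lk} (S̄_{c,lk}+D̄_{c,lk})⁻¹ (S_{c,lk}+D_{c,lk}))`. -/
theorem noise_fraction_trace_lower_bound {L K Nu NBS : ℕ}
    (σ2 : ℝ) (hσ : 0 < σ2)
    (H : Fin L → Fin K → Fin L → Matrix (Fin Nu) (Fin NBS) ℂ)
    (Wcb : Fin L → Matrix (Fin NBS) (Fin NBS) ℂ)
    (Wpb : Fin L → Fin K → Matrix (Fin NBS) (Fin NBS) ℂ)
    (l : Fin L) (k : Fin K)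
    (Wc : Fin L → Matrix (Fin NBS) (Fin NBS) ℂ)
    (Wp : Fin L → Fin K → Matrix (Fin NBS) (Fin NBS) ℂ) :
    ((Dcmat σ2 H Wc Wp l k *
        (Scmat H Wc l k + Dcmat σ2 H Wc Wp l k)⁻¹).trace).re ≥
      2 * ∑ i : Fin L, ∑ j : Fin K,
          (((Scmat H Wcb l k + Dcmat σ2 H Wcb Wpb l k)⁻¹ *
              H l k i * Wpb i j * (Wp i j)ᴴ * (H l k i)ᴴ).trace).re
        + 2 * ∑ i ∈ Finset.univ.erase l,
            (((Scmat H Wcb l k + Dcmat σ2 H Wcb Wpb l k)⁻¹ *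
                H l k i * Wcb i * (Wc i)ᴴ * (H l k i)ᴴ).trace).re
        - (((Scmat H Wcb l k + Dcmat σ2 H Wcb Wpb l k)⁻¹ *
              Dcmat σ2 H Wcb Wpb l k *
              (Scmat H Wcb l k + Dcmat σ2 H Wcb Wpb l k)⁻¹ *
              (Scmat H Wc l k + Dcmat σ2 H Wc Wp l k)).trace).re := by
  have hT := posDef_Scmat_add_Dcmat hσ H Wc Wp l k
  have hTb := posDef_Scmat_add_Dcmat hσ H Wcb Wpb l k
  have key := re_trace_smul_one_add_sum_mul_inv_ge (univ.disjSum (univ.erase l)) hσ.le hT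
    hTb.isHermitian.inv (streamChannel H Wc Wp l k) (streamChannel H Wcb Wpb l k)
  rw [← Dcmat_eq_smul_one_add_sum, ← Dcmat_eq_smul_one_add_sum] at key
  simp only [sum_disjSum, Fintype.sum_prod_type, streamChannel, Sum.elim_inl, Sum.elim_inr,
    conjTranspose_mul, Matrix.mul_assoc] at key ⊢
  linarith

end RSMA
end
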